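/- arXiv:1705.02126 — 3 statements merged into one kernel-verified Lean document; each statement's English description precedes it below -/
import Mathlib

section
/- In the interacting reinforced stochastic process model, if P(⋂_{j=1}^N {Z_{0,j} = 0}) + P(⋂_{j=1}^N {Z_{0,j} = 1}) < 1, then P(0 < Z_∞ < 1) > 0. -/
/-!
Let `v` be the positive right Perron vector of `w` with `∑ v = 1`; it exists because the columns
of `w` sum to `1` and `w` is irreducible. Then `q_n = v ⬝ᵥ Z_n` is a `[0, 1]`-valued martingale
converging to `Z_∞`. Writing `q = q_n`, `q' = q_{n+1}`, `r = r_n` and `S = v ⬝ᵥ X_{n+1}`,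
  `q' (1 - q') = (1 - r²) q (1 - q) + r (1 - r) (1 - 2q) (S - q) + r² S (1 - S)`,
where the middle term has conditional mean zero and the last one is nonnegative.
So `V_n = E[q_n (1 - q_n)]` satisfies `V_{n+1} ≥ (1 - r_n²) V_n`. Since `∑ r_n² < ∞` (as `2γ > 1`)
and `V_0 > 0` by the hypothesis on `Z_0`, the limit `E[Z_∞ (1 - Z_∞)]` of `V_n` is positive.
-/

open MeasureTheory ProbabilityTheory Filter Finset Topology

noncomputable section

/-- The natural filtration σ-field `F_n = σ(Z_{0,h} : h) ∨ σ(X_{k,j} : 1 ≤ k ≤ n, j)`. -/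
def filtSigma {Ω : Type*} {N : ℕ} (Z0 : Ω → Fin N → ℝ) (X : ℕ → Ω → Fin N → ℝ) (n : ℕ) :
    MeasurableSpace Ω :=
  MeasurableSpace.comap Z0 inferInstance ⊔
    ⨆ k ∈ Set.Icc 1 n, MeasurableSpace.comap (X k) inferInstance

/-- A system of `N` interacting reinforced stochastic processes located at the vertices of a
weighted directed graph with (column-normalized) weighted adjacency matrix `w`. -/
structure InteractingRSP (N : ℕ) (Ω : Type*) [mΩ : MeasurableSpace Ω]
    [StandardBorelSpace Ω] (P : Measure Ω) [IsProbabilityMeasure P] where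
  w : Matrix (Fin N) (Fin N) ℝ
  r : ℕ → ℝ
  c : ℝ
  γ : ℝ
  Z : ℕ → Ω → Fin N → ℝ
  X : ℕ → Ω → Fin N → ℝ
  c_pos : 0 < c
  γ_gt : 1 / 2 < γ
  γ_le : γ ≤ 1
  r_nonneg : ∀ n, 0 ≤ r n
  r_lt_one : ∀ n, r n < 1
  r_lim : Tendsto (fun n : ℕ => (n : ℝ) ^ γ * r n) atTop (𝓝 c)
  w_nonneg : ∀ h j, 0 ≤ w h j
  w_colsum : ∀ j, ∑ h, w h j = 1
  w_irred : ∀ i j, ∃ k : ℕ, 0 < k ∧ 0 < (w ^ k) i j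
  w_diag : ∃ Q D : Matrix (Fin N) (Fin N) ℂ, IsUnit Q.det ∧ D.IsDiag ∧
    w.map Complex.ofReal = Q * D * Q⁻¹
  F_le : ∀ n, filtSigma (Z 0) X n ≤ mΩ
  Z0_meas : Measurable (Z 0)
  X_meas : ∀ n, Measurable (X n)
  Z0_mem : ∀ ω j, Z 0 ω j ∈ Set.Icc (0 : ℝ) 1
  X_mem : ∀ n ω j, 1 ≤ n → X n ω j = 0 ∨ X n ω j = 1
  Z_rec : ∀ n ω j, Z (n + 1) ω j = (1 - r n) * Z n ω j + r n * X (n + 1) ω j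
  condIndep : ∀ n, iCondIndepFun (filtSigma (Z 0) X n) (F_le n)
      (fun j ω => X (n + 1) ω j) P
  condProb : ∀ n j, P[(fun ω => X (n + 1) ω j) | filtSigma (Z 0) X n]
      =ᵐ[P] fun ω => ∑ h, w h j * Z n ω h

open Matrix

namespace Matrix

variable {ι : Type*} [Fintype ι] {w : Matrix ι ι ℝ}

lemma sum_mulVec_of_sum_col (hcol : ∀ j, ∑ i, w i j = 1) (u : ι → ℝ) :
    ∑ i, (w *ᵥ u) i = ∑ j, u j := by
  simp only [mulVec, dotProduct]
  rw [sum_comm]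
  exact sum_congr rfl fun j _ => by rw [← sum_mul, hcol, one_mul]

lemma abs_mulVec_eq_self (hw : ∀ i j, 0 ≤ w i j) (hcol : ∀ j, ∑ i, w i j = 1) {u : ι → ℝ}
    (hu : w *ᵥ u = u) : w *ᵥ |u| = |u| := by
  have hle : ∀ i, |u| i ≤ (w *ᵥ |u|) i := fun i => by
    calc |u| i = |∑ j, w i j * u j| := by rw [Pi.abs_apply, ← congrFun hu i]; rfl
      _ ≤ ∑ j, |w i j * u j| := abs_sum_le_sum_abs _ _
      _ = (w *ᵥ |u|) i := sum_congr rfl fun j _ => by rw [abs_mul, abs_of_nonneg (hw i j)]; rfl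
  have hsum : ∑ i, |u| i = ∑ i, (w *ᵥ |u|) i := (sum_mulVec_of_sum_col hcol _).symm
  exact (funext fun i => ((sum_eq_sum_iff_of_le fun i _ => hle i).mp hsum i (mem_univ i))).symm

variable [DecidableEq ι]

lemma pow_mulVec_eq_self {u : ι → ℝ} (hu : w *ᵥ u = u) (k : ℕ) : (w ^ k) *ᵥ u = u := by
  induction k with
  | zero => simp
  | succ k ih => rw [pow_succ, ← mulVec_mulVec, hu, ih]

lemma exists_mulVec_eq_self_of_sum_col [Nonempty ι] (hcol : ∀ j, ∑ i, w i j = 1) :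
    ∃ u ≠ 0, w *ᵥ u = u := by
  have hdet : (w - 1).det = 0 := by
    refine exists_vecMul_eq_zero_iff.mp ⟨1, one_ne_zero, ?_⟩
    rw [vecMul_sub, vecMul_one, sub_eq_zero]
    funext j
    simp [vecMul, dotProduct, hcol]
  obtain ⟨u, hu0, hu⟩ := exists_mulVec_eq_zero_iff.mpr hdet
  exact ⟨u, hu0, by rwa [sub_mulVec, one_mulVec, sub_eq_zero] at hu⟩

lemma pos_of_mulVec_eq_self (hw : ∀ i j, 0 ≤ w i j) (hirr : ∀ i j, ∃ k : ℕ, 0 < (w ^ k) i j)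
    {u : ι → ℝ} (hu0 : 0 ≤ u) (hu : u ≠ 0) (hfix : w *ᵥ u = u) (i : ι) : 0 < u i := by
  obtain ⟨j, hj⟩ : ∃ j, 0 < u j := by
    by_contra! h
    exact hu (funext fun j => le_antisymm (h j) (hu0 j))
  obtain ⟨k, hk⟩ := hirr i j
  calc 0 < (w ^ k) i j * u j := mul_pos hk hj
    _ ≤ ∑ l, (w ^ k) i l * u l :=
        single_le_sum (f := fun l => (w ^ k) i l * u l)
          (fun l _ => mul_nonneg (pow_apply_nonneg hw k i l) (hu0 l)) (mem_univ j)
    _ = u i := congrFun (pow_mulVec_eq_self hfix k) i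

lemma exists_perron_vector [Nonempty ι] (hw : ∀ i j, 0 ≤ w i j) (hcol : ∀ j, ∑ i, w i j = 1)
    (hirr : ∀ i j, ∃ k : ℕ, 0 < (w ^ k) i j) :
    ∃ v : ι → ℝ, (∀ i, 0 < v i) ∧ ∑ i, v i = 1 ∧ w *ᵥ v = v := by
  obtain ⟨u, hu0, hu⟩ := exists_mulVec_eq_self_of_sum_col hcol
  have habs := abs_mulVec_eq_self hw hcol hu
  have hpos := pos_of_mulVec_eq_self hw hirr (abs_nonneg u) (by simpa using hu0) habs
  have hs : 0 < ∑ i, |u| i := sum_pos (fun i _ => hpos i) univ_nonempty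
  refine ⟨(∑ i, |u| i)⁻¹ • |u|, fun i => ?_, ?_, by rw [mulVec_smul, habs]⟩
  · simpa using mul_pos (inv_pos.mpr hs) (hpos i)
  · simp only [Pi.smul_apply, smul_eq_mul, ← mul_sum, inv_mul_cancel₀ hs.ne']

end Matrix

open Asymptotics in
lemma summable_sq_of_tendsto_rpow_mul {r : ℕ → ℝ} {γ c : ℝ} (hγ : 1 / 2 < γ)
    (hr : Tendsto (fun n : ℕ => (n : ℝ) ^ γ * r n) atTop (𝓝 c)) :
    Summable fun n => r n ^ 2 := by
  have hO : (fun n => r n ^ 2) =O[atTop] fun n : ℕ => (n : ℝ) ^ (-(2 * γ)) := by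
    refine (((hr.pow 2).isBigO_one ℝ).mul (isBigO_refl _ _)).congr' ?_
      (Eventually.of_forall fun n => one_mul _)
    filter_upwards [eventually_gt_atTop 0] with n hn
    have hn : (0 : ℝ) < n := Nat.cast_pos.mpr hn
    rw [mul_pow, ← Real.rpow_mul_natCast hn.le, mul_right_comm, ← Real.rpow_add hn]
    simp [mul_comm γ]
  exact summable_of_isBigO_nat (Real.summable_nat_rpow.mpr (by linarith)) hO

section MultiplicativeRecursion

variable {V a : ℕ → ℝ}

lemma one_sub_sum_Ico_mul_le (ha0 : ∀ n, 0 ≤ a n) (ha1 : ∀ n, a n ≤ 1)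
    (hstep : ∀ n, (1 - a n) * V n ≤ V (n + 1)) {K : ℕ} (hK : 0 ≤ V K) :
    ∀ n ≥ K, (1 - ∑ k ∈ Ico K n, a k) * V K ≤ V n := by
  intro n hn
  induction n, hn using Nat.le_induction with
  | base => simp
  | succ n hn ih =>
    have hsum : 0 ≤ ∑ k ∈ Ico K n, a k := sum_nonneg fun k _ => ha0 k
    have := mul_le_mul_of_nonneg_left ih (sub_nonneg.mpr (ha1 n))
    rw [sum_Ico_succ_top hn]
    nlinarith [hstep n, mul_nonneg (mul_nonneg (ha0 n) hsum) hK]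

lemma pos_of_tendsto_of_one_sub_mul_le {L : ℝ} (hV : Tendsto V atTop (𝓝 L)) (hV0 : 0 < V 0)
    (ha0 : ∀ n, 0 ≤ a n) (ha1 : ∀ n, a n < 1) (ha : Summable a)
    (hstep : ∀ n, (1 - a n) * V n ≤ V (n + 1)) : 0 < L := by
  have hpos : ∀ n, 0 < V n := fun n => by
    induction n with
    | zero => exact hV0
    | succ n ih => exact (mul_pos (sub_pos.mpr (ha1 n)) ih).trans_le (hstep n)
  obtain ⟨K, hK⟩ := Metric.cauchySeq_iff'.mp ha.hasSum.tendsto_sum_nat.cauchySeq (1 / 2)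
    (by norm_num)
  have hlow : ∀ n ≥ K, V K / 2 ≤ V n := fun n hn => by
    have htail : ∑ k ∈ Ico K n, a k < 1 / 2 := by
      rw [sum_Ico_eq_sub _ hn]
      exact (abs_lt.mp (hK n hn)).2
    nlinarith [one_sub_sum_Ico_mul_le (fun n => ha0 n) (fun n => (ha1 n).le) hstep
      (hpos K).le n hn, hpos K]
  exact (half_pos (hpos K)).trans_le (ge_of_tendsto hV (eventually_atTop.mpr ⟨K, hlow⟩))

end MultiplicativeRecursion

lemma mul_one_sub_mem_Icc {a : ℝ} (ha : a ∈ Set.Icc 0 1) : a * (1 - a) ∈ Set.Icc 0 1 :=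
  ⟨mul_nonneg ha.1 (sub_nonneg.mpr ha.2), by nlinarith [ha.1, ha.2]⟩

section Variance

variable {Ω : Type*} {m m₀ : MeasurableSpace Ω} {μ : Measure Ω} [IsFiniteMeasure μ]

lemma integral_mul_sub_eq_zero_of_condExp_ae_eq (hm : m ≤ m₀) {g S q : Ω → ℝ} {C : ℝ}
    (hg : StronglyMeasurable[m] g) (hgC : ∀ ω, |g ω| ≤ C) (hS : Integrable S μ)
    (hq : Integrable q μ) (hSq : μ[S | m] =ᵐ[μ] q) :
    ∫ ω, g ω * (S ω - q ω) ∂μ = 0 := by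
  have hgm : AEStronglyMeasurable g μ := (hg.mono hm).aestronglyMeasurable
  have hint : ∀ f : Ω → ℝ, Integrable f μ → Integrable (fun ω => g ω * f ω) μ :=
    fun f hf => hf.bdd_mul hgm (ae_of_all _ hgC)
  have hgS : ∫ ω, g ω * S ω ∂μ = ∫ ω, g ω * q ω ∂μ :=
    calc ∫ ω, g ω * S ω ∂μ = ∫ ω, μ[g * S | m] ω ∂μ := (integral_condExp hm).symm
      _ = ∫ ω, g ω * q ω ∂μ := integral_congr_ae <|
          (condExp_stronglyMeasurable_mul_of_bound hm hg hS C (ae_of_all _ hgC)).trans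
            (hSq.mono fun ω h => by simp [h])
  simp_rw [mul_sub]
  rw [integral_sub (hint S hS) (hint q hq), hgS, sub_self]

lemma one_sub_sq_mul_integral_le (hm : m ≤ m₀) {q S : Ω → ℝ} (hq : StronglyMeasurable[m] q)
    (hS : AEMeasurable S μ) (hq01 : ∀ ω, q ω ∈ Set.Icc 0 1) (hS01 : ∀ ω, S ω ∈ Set.Icc 0 1)
    (hSq : μ[S | m] =ᵐ[μ] q) (r : ℝ) :
    (1 - r ^ 2) * ∫ ω, q ω * (1 - q ω) ∂μ
      ≤ ∫ ω, ((1 - r) * q ω + r * S ω) * (1 - ((1 - r) * q ω + r * S ω)) ∂μ := by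
  have hqm : AEMeasurable q μ := (hq.mono hm).measurable.aemeasurable
  have hqq : Integrable (fun ω => q ω * (1 - q ω)) μ :=
    .of_mem_Icc 0 1 (by fun_prop) (ae_of_all _ fun ω => mul_one_sub_mem_Icc (hq01 ω))
  have hSS : Integrable (fun ω => S ω * (1 - S ω)) μ :=
    .of_mem_Icc 0 1 (by fun_prop) (ae_of_all _ fun ω => mul_one_sub_mem_Icc (hS01 ω))
  have hmart_int : Integrable (fun ω => (1 - 2 * q ω) * (S ω - q ω)) μ :=
    .of_mem_Icc (-1) 1 (by fun_prop) (ae_of_all _ fun ω => by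
      constructor <;> nlinarith [(hq01 ω).1, (hq01 ω).2, (hS01 ω).1, (hS01 ω).2])
  have hmart : ∫ ω, (1 - 2 * q ω) * (S ω - q ω) ∂μ = 0 :=
    integral_mul_sub_eq_zero_of_condExp_ae_eq hm (C := 1) (by fun_prop)
      (fun ω => abs_le.mpr ⟨by linarith [(hq01 ω).2], by linarith [(hq01 ω).1]⟩)
      (.of_mem_Icc 0 1 hS (ae_of_all _ hS01)) (.of_mem_Icc 0 1 hqm (ae_of_all _ hq01)) hSq
  have hsplit : ∀ ω, ((1 - r) * q ω + r * S ω) * (1 - ((1 - r) * q ω + r * S ω))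
      = ((1 - r ^ 2) * (q ω * (1 - q ω)) + r * (1 - r) * ((1 - 2 * q ω) * (S ω - q ω)))
        + r ^ 2 * (S ω * (1 - S ω)) := fun ω => by ring
  simp_rw [hsplit]
  rw [integral_add, integral_add, integral_const_mul, integral_const_mul, integral_const_mul,
    hmart, mul_zero, add_zero, le_add_iff_nonneg_right]
  · exact mul_nonneg (sq_nonneg r) (integral_nonneg fun ω => (mul_one_sub_mem_Icc (hS01 ω)).1)
  · exact hqq.const_mul _
  · exact hmart_int.const_mul _
  · exact (hqq.const_mul _).add (hmart_int.const_mul _)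
  · exact hSS.const_mul _

end Variance

section WeightedAverage

variable {ι : Type*} [Fintype ι] {v x : ι → ℝ}

lemma dotProduct_mem_Icc (hv : ∀ i, 0 ≤ v i) (hv1 : ∑ i, v i = 1)
    (hx : ∀ i, x i ∈ Set.Icc 0 1) : v ⬝ᵥ x ∈ Set.Icc 0 1 :=
  ⟨sum_nonneg fun i _ => mul_nonneg (hv i) (hx i).1,
    (sum_le_sum fun i _ => mul_le_of_le_one_right (hv i) (hx i).2).trans_eq hv1⟩

lemma dotProduct_pos_of_exists_ne_zero (hv : ∀ i, 0 < v i) (hx : ∀ i, 0 ≤ x i)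
    (hx0 : ∃ i, x i ≠ 0) : 0 < v ⬝ᵥ x := by
  obtain ⟨i, hi⟩ := hx0
  exact sum_pos' (fun j _ => mul_nonneg (hv j).le (hx j))
    ⟨i, mem_univ i, mul_pos (hv i) ((hx i).lt_of_ne' hi)⟩

lemma dotProduct_mul_one_sub_pos (hv : ∀ i, 0 < v i) (hv1 : ∑ i, v i = 1)
    (hx : ∀ i, x i ∈ Set.Icc 0 1) (hx0 : ∃ i, x i ≠ 0) (hx1 : ∃ i, x i ≠ 1) :
    0 < (v ⬝ᵥ x) * (1 - v ⬝ᵥ x) := by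
  have hcompl : 1 - v ⬝ᵥ x = v ⬝ᵥ (1 - x) := by rw [dotProduct_sub, dotProduct_one, hv1]
  refine mul_pos (dotProduct_pos_of_exists_ne_zero hv (fun i => (hx i).1) hx0) ?_
  rw [hcompl]
  refine dotProduct_pos_of_exists_ne_zero hv (fun i => sub_nonneg.mpr (hx i).2) ?_
  obtain ⟨i, hi⟩ := hx1
  exact ⟨i, sub_ne_zero.mpr (Ne.symm hi)⟩

end WeightedAverage

section Limit

variable {Ω : Type*} [MeasurableSpace Ω] {μ : Measure Ω}

lemma integral_dotProduct_mul_one_sub_pos [IsProbabilityMeasure μ] {ι : Type*} [Fintype ι]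
    {v : ι → ℝ} {x : Ω → ι → ℝ} (hv : ∀ i, 0 < v i) (hv1 : ∑ i, v i = 1) (hxm : Measurable x)
    (hx : ∀ ω i, x ω i ∈ Set.Icc 0 1)
    (hdeg : μ (⋂ i, {ω | x ω i = 0}) + μ (⋂ i, {ω | x ω i = 1}) < 1) :
    0 < ∫ ω, (v ⬝ᵥ x ω) * (1 - v ⬝ᵥ x ω) ∂μ := by
  set A := ⋂ i, {ω | x ω i = 0}
  set B := ⋂ i, {ω | x ω i = 1}
  have hx01 : ∀ ω, v ⬝ᵥ x ω ∈ Set.Icc 0 1 := fun ω =>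
    dotProduct_mem_Icc (fun i => (hv i).le) hv1 (hx ω)
  have hint : Integrable (fun ω => (v ⬝ᵥ x ω) * (1 - v ⬝ᵥ x ω)) μ :=
    .of_mem_Icc 0 1 (by fun_prop) (ae_of_all _ fun ω => mul_one_sub_mem_Icc (hx01 ω))
  rw [integral_pos_iff_support_of_nonneg (fun ω => (mul_one_sub_mem_Icc (hx01 ω)).1) hint]
  have hsupp : (A ∪ B)ᶜ ⊆ Function.support fun ω => (v ⬝ᵥ x ω) * (1 - v ⬝ᵥ x ω) := by
    intro ω hω
    simp only [Set.compl_union, Set.mem_inter_iff, Set.mem_compl_iff, A, B, Set.mem_iInter,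
      not_forall] at hω
    exact (dotProduct_mul_one_sub_pos hv hv1 (hx ω) hω.1 hω.2).ne'
  refine (pos_iff_ne_zero.mpr fun h => hdeg.not_ge ?_).trans_le (measure_mono hsupp)
  calc 1 = μ Set.univ := measure_univ.symm
    _ ≤ μ (A ∪ B) + μ (A ∪ B)ᶜ := by
      rw [← Set.union_compl_self (A ∪ B)]
      exact measure_union_le _ _
    _ ≤ μ A + μ B := by rw [h, add_zero]; exact measure_union_le A B

lemma tendsto_integral_mul_one_sub [IsFiniteMeasure μ] {Y : ℕ → Ω → ℝ} {Y' : Ω → ℝ}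
    (hY : ∀ n, AEStronglyMeasurable (Y n) μ) (hY01 : ∀ n ω, Y n ω ∈ Set.Icc 0 1)
    (hlim : ∀ᵐ ω ∂μ, Tendsto (Y · ω) atTop (𝓝 (Y' ω))) :
    Tendsto (fun n => ∫ ω, Y n ω * (1 - Y n ω) ∂μ) atTop (𝓝 (∫ ω, Y' ω * (1 - Y' ω) ∂μ)) := by
  refine tendsto_integral_of_dominated_convergence (fun _ => 1) (fun n => by fun_prop)
    (integrable_const 1) (fun n => ae_of_all _ fun ω => ?_)
    (hlim.mono fun ω h => h.mul (tendsto_const_nhds.sub h))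
  exact (Real.norm_of_nonneg (mul_one_sub_mem_Icc (hY01 n ω)).1).trans_le
    (mul_one_sub_mem_Icc (hY01 n ω)).2

lemma measure_mem_Ioo_pos_of_integral_mul_one_sub_pos {Y : Ω → ℝ}
    (hY : ∀ᵐ ω ∂μ, Y ω ∈ Set.Icc 0 1) (hpos : 0 < ∫ ω, Y ω * (1 - Y ω) ∂μ) :
    0 < μ {ω | Y ω ∈ Set.Ioo 0 1} := by
  refine pos_iff_ne_zero.mpr fun h => hpos.ne' (integral_eq_zero_of_ae ?_)
  filter_upwards [measure_eq_zero_iff_ae_notMem.mp h, hY] with ω hIoo hIcc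
  rcases Set.eq_endpoints_or_mem_Ioo_of_mem_Icc hIcc with h0 | h1 | h
  · simp [h0]
  · simp [h1]
  · exact absurd h hIoo

end Limit

lemma measurable_filtSigma_X {Ω : Type*} {N : ℕ} {Z0 : Ω → Fin N → ℝ}
    {X : ℕ → Ω → Fin N → ℝ} {k n : ℕ} (hk : k ∈ Set.Icc 1 n) :
    Measurable[filtSigma Z0 X n] (X k) :=
  Measurable.of_comap_le <| le_sup_of_le_right <|
    le_iSup₂ (f := fun k (_ : k ∈ Set.Icc 1 n) => MeasurableSpace.comap (X k) inferInstance) k hk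

lemma measurable_filtSigma_Z0 {Ω : Type*} {N : ℕ} {Z0 : Ω → Fin N → ℝ}
    {X : ℕ → Ω → Fin N → ℝ} {n : ℕ} : Measurable[filtSigma Z0 X n] Z0 :=
  Measurable.of_comap_le le_sup_left

namespace InteractingRSP

variable {N : ℕ} {Ω : Type*} [MeasurableSpace Ω] [StandardBorelSpace Ω] {P : Measure Ω}
  [IsProbabilityMeasure P] (M : InteractingRSP N Ω P)

lemma Z_succ (n : ℕ) (ω : Ω) : M.Z (n + 1) ω = (1 - M.r n) • M.Z n ω + M.r n • M.X (n + 1) ω :=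
  funext (M.Z_rec n ω)

lemma X_mem_Icc (n : ℕ) (ω : Ω) (j : Fin N) : M.X (n + 1) ω j ∈ Set.Icc 0 1 := by
  rcases M.X_mem (n + 1) ω j (by omega) with h | h <;> simp [h]

lemma Z_mem_Icc (n : ℕ) (ω : Ω) (j : Fin N) : M.Z n ω j ∈ Set.Icc 0 1 := by
  induction n with
  | zero => exact M.Z0_mem ω j
  | succ n ih =>
    have hr0 := M.r_nonneg n
    have hr1 := M.r_lt_one n
    have hx := M.X_mem_Icc n ω j
    rw [M.Z_rec]
    constructor <;> nlinarith [ih.1, ih.2, hx.1, hx.2]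

lemma measurable_filtSigma_Z {k n : ℕ} (hk : k ≤ n) :
    Measurable[filtSigma (M.Z 0) M.X n] (M.Z k) := by
  induction k with
  | zero => exact measurable_filtSigma_Z0
  | succ k ih =>
    have hX := measurable_filtSigma_X (Z0 := M.Z 0) (X := M.X) (k := k + 1) ⟨by omega, hk⟩
    simp_rw [funext (M.Z_succ k)]
    exact ((ih (by omega)).const_smul (1 - M.r k)).add (hX.const_smul (M.r k))

lemma measurable_Z (n : ℕ) : Measurable (M.Z n) :=
  (M.measurable_filtSigma_Z le_rfl).mono (M.F_le n) le_rfl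

lemma condExp_dotProduct_X {v : Fin N → ℝ} (hv : M.w *ᵥ v = v) (n : ℕ) :
    P[fun ω => v ⬝ᵥ M.X (n + 1) ω | filtSigma (M.Z 0) M.X n]
      =ᵐ[P] fun ω => v ⬝ᵥ M.Z n ω := by
  have hXi : ∀ i, Integrable (fun ω => M.X (n + 1) ω i) P := fun i =>
    .of_mem_Icc 0 1 ((measurable_pi_apply i).comp (M.X_meas (n + 1))).aemeasurable
      (ae_of_all _ (M.X_mem_Icc n · i))
  have hsum : (fun ω => v ⬝ᵥ M.X (n + 1) ω) = ∑ i, v i • fun ω => M.X (n + 1) ω i := by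
    funext ω
    simp [dotProduct, Finset.sum_apply]
  rw [hsum]
  refine (condExp_finsetSum (fun i _ => (hXi i).smul (v i)) _).trans ?_
  have hcond : ∀ i, P[v i • fun ω => M.X (n + 1) ω i | filtSigma (M.Z 0) M.X n]
      =ᵐ[P] v i • fun ω => ∑ h, M.w h i * M.Z n ω h :=
    fun i => (condExp_smul _ _ _).trans ((M.condProb n i).const_smul (v i))
  filter_upwards [ae_all_iff.mpr hcond] with ω hω
  simp only [Finset.sum_apply, hω, Pi.smul_apply, smul_eq_mul]
  calc ∑ i, v i * ∑ h, M.w h i * M.Z n ω h = v ⬝ᵥ (M.Z n ω ᵥ* M.w) := by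
        simp only [dotProduct, vecMul, mul_comm]
    _ = v ⬝ᵥ M.Z n ω := by rw [dotProduct_comm, ← dotProduct_mulVec, hv, dotProduct_comm]

lemma one_sub_sq_mul_integral_le_succ {v : Fin N → ℝ} (hv0 : ∀ i, 0 ≤ v i) (hv1 : ∑ i, v i = 1)
    (hv : M.w *ᵥ v = v) (n : ℕ) :
    (1 - M.r n ^ 2) * ∫ ω, (v ⬝ᵥ M.Z n ω) * (1 - v ⬝ᵥ M.Z n ω) ∂P
      ≤ ∫ ω, (v ⬝ᵥ M.Z (n + 1) ω) * (1 - v ⬝ᵥ M.Z (n + 1) ω) ∂P := by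
  have hdot : Continuous fun x : Fin N → ℝ => v ⬝ᵥ x := continuous_const.dotProduct continuous_id
  have hq : ∀ ω, v ⬝ᵥ M.Z (n + 1) ω
      = (1 - M.r n) * (v ⬝ᵥ M.Z n ω) + M.r n * (v ⬝ᵥ M.X (n + 1) ω) := fun ω => by
    rw [M.Z_succ, dotProduct_add, dotProduct_smul, dotProduct_smul, smul_eq_mul, smul_eq_mul]
  simp_rw [hq]
  exact one_sub_sq_mul_integral_le (M.F_le n)
    (hdot.measurable.comp (M.measurable_filtSigma_Z le_rfl)).stronglyMeasurable
    (hdot.measurable.comp (M.X_meas (n + 1))).aemeasurable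
    (fun ω => dotProduct_mem_Icc hv0 hv1 (M.Z_mem_Icc n ω))
    (fun ω => dotProduct_mem_Icc hv0 hv1 (M.X_mem_Icc n ω)) (M.condExp_dotProduct_X hv n) _

end InteractingRSP

/-- **The limit is non-degenerate with positive probability** (Theorem `th:sincro` (ii)):
if `P(⋂_j {Z_{0,j} = 0}) + P(⋂_j {Z_{0,j} = 1}) < 1`, then `P(0 < Z_∞ < 1) > 0`. -/
theorem Zinf_in_Ioo_pos_prob
    {N : ℕ} (hN : 1 ≤ N) {Ω : Type*} [MeasurableSpace Ω] [StandardBorelSpace Ω]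
    {P : Measure Ω} [IsProbabilityMeasure P]
    (M : InteractingRSP N Ω P)
    (Zinf : Ω → ℝ)
    (hZinf : ∀ j, ∀ᵐ ω ∂P, Tendsto (fun n => M.Z n ω j) atTop (𝓝 (Zinf ω)))
    (h0 : P (⋂ j : Fin N, {ω | M.Z 0 ω j = 0}) + P (⋂ j : Fin N, {ω | M.Z 0 ω j = 1}) < 1) :
    0 < P {ω | Zinf ω ∈ Set.Ioo (0 : ℝ) 1} := by
  have : Nonempty (Fin N) := ⟨⟨0, hN⟩⟩
  obtain ⟨v, hv, hv1, hfix⟩ := Matrix.exists_perron_vector M.w_nonneg M.w_colsum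
    fun i j => (M.w_irred i j).imp fun _ => And.right
  have hv0 : ∀ i, 0 ≤ v i := fun i => (hv i).le
  have hq01 : ∀ n ω, v ⬝ᵥ M.Z n ω ∈ Set.Icc 0 1 := fun n ω =>
    dotProduct_mem_Icc hv0 hv1 (M.Z_mem_Icc n ω)
  have hq_lim : ∀ᵐ ω ∂P, Tendsto (fun n => v ⬝ᵥ M.Z n ω) atTop (𝓝 (Zinf ω)) := by
    filter_upwards [ae_all_iff.mpr hZinf] with ω hω
    simpa [dotProduct, ← sum_mul, hv1] using
      tendsto_finsetSum univ fun j _ => (hω j).const_mul (v j)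
  have hV_lim := tendsto_integral_mul_one_sub
    (fun n => ((continuous_const.dotProduct continuous_id).measurable.comp
      (M.measurable_Z n)).aestronglyMeasurable) hq01 hq_lim
  have hV_pos := pos_of_tendsto_of_one_sub_mul_le hV_lim
    (integral_dotProduct_mul_one_sub_pos hv hv1 (M.measurable_Z 0) (M.Z_mem_Icc 0) h0)
    (fun n => sq_nonneg _) (fun n => pow_lt_one₀ (M.r_nonneg n) (M.r_lt_one n) two_ne_zero)
    (summable_sq_of_tendsto_rpow_mul M.γ_gt M.r_lim)
    (M.one_sub_sq_mul_integral_le_succ hv0 hv1 hfix)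
  exact measure_mem_Ioo_pos_of_integral_mul_one_sub_pos
    (hq_lim.mono fun ω h => isClosed_Icc.mem_of_tendsto h (.of_forall (hq01 · ω))) hV_pos

end
end

section
/- (Generalized Kronecker lemma) Let {v_{n,k} : 1 ≤ k ≤ n} be a triangular array of nonzero complex numbers and (z_n)_n a sequence of complex numbers such that: lim_n v_{n,k} = 0 for each fixed k; lim_n v_{n,n} exists and is finite; ∑_{k=1}^n |v_{n,k} − v_{n,k−1}| = O(1) (uniformly bounded in n); and the series ∑_n z_n converges. Then lim_n ∑_{k=1}^n v_{n,k} z_k = 0. -/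
/-!
Write `r n = S - ∑_{k ≤ n} z k` for the tails of the series, so that `z k = r (k-1) - r k`.
Summation by parts turns `∑_{k ≤ n} v n k * z k` into
`v n 1 * S - v n n * r n + ∑_{2 ≤ k ≤ n} (v n k - v n (k-1)) * r (k-1)`.
The first term vanishes because the first column does, the second because the rows, hence the
diagonal, are bounded by `‖v n 1‖ + C`, and the last by a Toeplitz argument: the weights
`v n k - v n (k-1)` have `ℓ¹`-bounded rows and columns tending to `0`, and `r → 0`.
-/

open Filter Topology Finset

section NormedRing

variable {R : Type*} [NormedRing R]

theorem norm_sum_mul_le_sum_range_add {s : Finset ℕ} {a r : ℕ → R} {K : ℕ} {δ : ℝ}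
    (hr : ∀ k ≥ K, ‖r k‖ ≤ δ) :
    ‖∑ k ∈ s, a k * r k‖ ≤ ∑ k ∈ range K, ‖a k‖ * ‖r k‖ + (∑ k ∈ s, ‖a k‖) * δ := by
  have head : ∑ k ∈ s with k < K, ‖a k‖ * ‖r k‖ ≤ ∑ k ∈ range K, ‖a k‖ * ‖r k‖ :=
    sum_le_sum_of_subset_of_nonneg (fun k hk => mem_range.2 (mem_filter.1 hk).2)
      fun _ _ _ => by positivity
  have tail : ∑ k ∈ s with ¬k < K, ‖a k‖ * ‖r k‖ ≤ (∑ k ∈ s, ‖a k‖) * δ := by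
    have hδ : 0 ≤ δ := (norm_nonneg _).trans (hr K le_rfl)
    rw [sum_mul]
    calc ∑ k ∈ s with ¬k < K, ‖a k‖ * ‖r k‖ ≤ ∑ k ∈ s with ¬k < K, ‖a k‖ * δ :=
          sum_le_sum fun k hk => by gcongr; exact hr k (not_lt.1 (mem_filter.1 hk).2)
      _ ≤ ∑ k ∈ s, ‖a k‖ * δ :=
          sum_le_sum_of_subset_of_nonneg (filter_subset _ _) fun _ _ _ => by positivity
  calc ‖∑ k ∈ s, a k * r k‖ ≤ ∑ k ∈ s, ‖a k‖ * ‖r k‖ :=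
        norm_sum_le_of_le _ fun _ _ => norm_mul_le _ _
    _ = ∑ k ∈ s with k < K, ‖a k‖ * ‖r k‖ + ∑ k ∈ s with ¬k < K, ‖a k‖ * ‖r k‖ :=
      (sum_filter_add_sum_filter_not _ _ _).symm
    _ ≤ _ := add_le_add head tail

theorem tendsto_sum_mul_of_tendsto_zero {ι : Type*} {l : Filter ι} {s : ι → Finset ℕ}
    {a : ι → ℕ → R} {r : ℕ → R} {C : ℝ} (hcol : ∀ k, Tendsto (fun n => a n k) l (𝓝 0))
    (hrow : ∀ n, ∑ k ∈ s n, ‖a n k‖ ≤ C) (hr : Tendsto r atTop (𝓝 0)) :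
    Tendsto (fun n => ∑ k ∈ s n, a n k * r k) l (𝓝 0) := by
  rw [NormedAddGroup.tendsto_nhds_zero]
  intro ε hε
  obtain ⟨δ, hδ, hCδ⟩ := exists_pos_mul_lt (half_pos hε) C
  obtain ⟨K, hK⟩ := eventually_atTop.1 ((NormedAddGroup.tendsto_nhds_zero.1 hr) δ hδ)
  have head : Tendsto (fun n => ∑ k ∈ range K, ‖a n k‖ * ‖r k‖) l (𝓝 0) := by
    simpa using tendsto_finsetSum _ fun k _ => (hcol k).norm.mul_const ‖r k‖
  filter_upwards [head.eventually (gt_mem_nhds (half_pos hε))] with n hn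
  calc ‖∑ k ∈ s n, a n k * r k‖
      ≤ ∑ k ∈ range K, ‖a n k‖ * ‖r k‖ + (∑ k ∈ s n, ‖a n k‖) * δ :=
        norm_sum_mul_le_sum_range_add fun k hk => (hK k hk).le
    _ ≤ ∑ k ∈ range K, ‖a n k‖ * ‖r k‖ + C * δ := by gcongr; exact hrow n
    _ < ε := by linarith

theorem sum_range_mul_eq_by_parts_tail (f ζ : ℕ → R) (S : R) (n : ℕ) :
    ∑ k ∈ range n, f k * ζ k = f 0 * S - f (n - 1) * (S - ∑ k ∈ range n, ζ k)
      + ∑ k ∈ range (n - 1), (f (k + 1) - f k) * (S - ∑ j ∈ range (k + 1), ζ j) := by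
  have hΔ : ∑ k ∈ range (n - 1), (f (k + 1) - f k) * S = (f (n - 1) - f 0) * S := by
    rw [← sum_mul, sum_range_sub]
  have hparts := sum_range_by_parts f ζ n
  simp only [smul_eq_mul] at hparts
  simp only [hparts, mul_sub, sum_sub_distrib, hΔ]
  noncomm_ring

theorem tendsto_sum_range_mul_of_boundedVariation {w : ℕ → ℕ → R} {ζ : ℕ → R} {C : ℝ} {S : R}
    (hcol : ∀ k, Tendsto (fun n => w n k) atTop (𝓝 0))
    (hvar : ∀ n, ∑ k ∈ range (n - 1), ‖w n (k + 1) - w n k‖ ≤ C)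
    (hζ : Tendsto (fun n => ∑ k ∈ range n, ζ k) atTop (𝓝 S)) :
    Tendsto (fun n => ∑ k ∈ range n, w n k * ζ k) atTop (𝓝 0) := by
  set r : ℕ → R := fun n => S - ∑ k ∈ range n, ζ k
  have hr : Tendsto r atTop (𝓝 0) := by
    simpa [r] using (tendsto_const_nhds (x := S)).sub hζ
  have hfirst : Tendsto (fun n => w n 0 * S) atTop (𝓝 0) := by
    simpa using (hcol 0).mul_const S
  have hlast : Tendsto (fun n => w n (n - 1) * r n) atTop (𝓝 0) := by
    refine squeeze_zero_norm (a := fun n => (‖w n 0‖ + C) * ‖r n‖) (fun n => ?_) ?_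
    · have hdiag : ‖w n (n - 1)‖ ≤ ‖w n 0‖ + C :=
        calc ‖w n (n - 1)‖ ≤ ‖w n 0‖ + ‖w n (n - 1) - w n 0‖ := norm_le_insert' _ _
          _ ≤ ‖w n 0‖ + C := by
            rw [← sum_range_sub]
            gcongr
            exact (norm_sum_le _ _).trans (hvar n)
      exact (norm_mul_le _ _).trans (by gcongr)
    · simpa using ((hcol 0).norm.add_const C).mul hr.norm
  have hmiddle : Tendsto (fun n => ∑ k ∈ range (n - 1), (w n (k + 1) - w n k) * r (k + 1))
      atTop (𝓝 0) :=
    tendsto_sum_mul_of_tendsto_zero (fun k => by simpa using (hcol (k + 1)).sub (hcol k))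
      hvar (hr.comp (tendsto_add_atTop_nat 1))
  simpa [r, ← sum_range_mul_eq_by_parts_tail] using (hfirst.sub hlast).add hmiddle

end NormedRing

theorem sum_Icc_succ_eq_sum_range {M : Type*} [AddCommMonoid M] (f : ℕ → M) (m n : ℕ) :
    ∑ k ∈ Icc (m + 1) n, f k = ∑ k ∈ range (n - m), f (k + m + 1) := by
  rw [← Ico_add_one_right_eq_Icc, sum_Ico_eq_sum_range, Nat.add_sub_add_right]
  exact sum_congr rfl fun k _ => by rw [add_comm, ← add_assoc]

theorem generalized_kronecker_lemma_general
    (v : ℕ → ℕ → ℂ) (z : ℕ → ℂ)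
    (hv_fixed : ∀ k, 1 ≤ k → Tendsto (fun n => v n k) atTop (𝓝 0))
    (hv_var : ∃ C : ℝ, ∀ n, ∑ k ∈ Finset.Icc 2 n, ‖v n k - v n (k - 1)‖ ≤ C)
    (hz : ∃ S : ℂ, Tendsto (fun n => ∑ k ∈ Finset.Icc 1 n, z k) atTop (𝓝 S)) :
    Tendsto (fun n => ∑ k ∈ Finset.Icc 1 n, v n k * z k) atTop (𝓝 0) := by
  obtain ⟨C, hC⟩ := hv_var
  obtain ⟨S, hS⟩ := hz
  have hone (f : ℕ → ℂ) (n : ℕ) : ∑ k ∈ Icc 1 n, f k = ∑ k ∈ range n, f (k + 1) := by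
    simpa using sum_Icc_succ_eq_sum_range f 0 n
  simp only [hone] at hS ⊢
  refine tendsto_sum_range_mul_of_boundedVariation (w := fun n k => v n (k + 1)) (C := C)
    (fun k => hv_fixed (k + 1) (Nat.le_add_left 1 k)) (fun n => ?_) hS
  simpa [sum_Icc_succ_eq_sum_range _ 1 n] using hC n

/-- **Generalized Kronecker lemma** (Corollary `kronecker-complex`): if `{v_{n,k} : 1 ≤ k ≤ n}`
is a triangular array of nonzero complex numbers with `lim_n v_{n,k} = 0` for each fixed `k`,
`lim_n v_{n,n}` existing finite, rows of uniformly bounded total variation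
`∑_{k=2}^n |v_{n,k} - v_{n,k-1}| = O(1)`, and if the series `∑_n z_n` converges, then
`lim_n ∑_{k=1}^n v_{n,k} z_k = 0`. -/
theorem generalized_kronecker_lemma
    (v : ℕ → ℕ → ℂ) (z : ℕ → ℂ)
    (hne : ∀ n k, 1 ≤ k → k ≤ n → v n k ≠ 0)
    (hv_fixed : ∀ k, 1 ≤ k → Tendsto (fun n => v n k) atTop (𝓝 0))
    (hv_diag : ∃ L : ℂ, Tendsto (fun n => v n n) atTop (𝓝 L))
    (hv_var : ∃ C : ℝ, ∀ n, ∑ k ∈ Finset.Icc 2 n, ‖v n k - v n (k - 1)‖ ≤ C)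
    (hz : ∃ S : ℂ, Tendsto (fun n => ∑ k ∈ Finset.Icc 1 n, z k) atTop (𝓝 S)) :
    Tendsto (fun n => ∑ k ∈ Finset.Icc 1 n, v n k * z k) atTop (𝓝 0) :=
  generalized_kronecker_lemma_general v z hv_fixed hv_var hz
end

section
/- Let c > 0, let (r_n) satisfy 0 ≤ r_n < 1 and n·r_n = c + O(n^{-1}), and let x = a_x + i b_x, y = a_y + i b_y be complex numbers with a_x, a_y > 0 and c(a_x + a_y) > 1. With p_n and F_{k+1,n} as in the context, the following limits hold: (1) lim_n n·∑_{k=m_0}^{n−1} r_k² F_{k+1,n}(x)F_{k+1,n}(y) = c²/(c(x+y)−1); (2) lim_n n·∑_{k=m_0}^{n−1} r_k² ln(n/k) F_{k+1,n}(x)F_{k+1,n}(y) = c²/(c(x+y)−1)²; (3) lim_n n·∑_{k=m_0}^{n−1} r_k² ln²(n/k) F_{k+1,n}(x)F_{k+1,n}(y) = 2c²/(c(x+y)−1)³. -/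
/-!
Write `T_j(n) = ∑_{k=m₀}^{n-1} r_k² ln^j(n/k) F_{k+1,n}(x) F_{k+1,n}(y)`. Since
`F_{k+1,n+1}(x) = F_{k+1,n}(x) (1 - x r_{n+1})` and `ln((n+1)/k) = ln(n/k) + ln((n+1)/n)`, the
binomial theorem turns `S_j(n) = n T_j(n)` into a first-order linear recurrence
`S_j(n+1) = (1 + a_n) S_j(n) + b_j(n)` with `n a_n → α = 1 - c(x+y)` and
`n b_j(n) → β_j = j · lim S_{j-1}` (`β_0 = c²`). Since `Re α < 0`, the homogeneous part contracts
like `1 - δ/n`, i.e. like `n^{-δ}`, which forces `S_j(n) → -β_j / α`. Induction on `j` gives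
`S_j(n) → j! c² / (c(x+y) - 1)^{j+1}`; the three limits are the cases `j = 0, 1, 2`.
-/

open Filter Topology

noncomputable section

/-- `p_n(x) = ∏_{m=m₀}^n (1 - x r_m)` (so that `p_{m₀-1}(x) = 1`, the empty product).
The quotient `p_n(x)/p_k(x)` is the paper's `F_{k+1,n}(x)`. -/
def pprod (r : ℕ → ℝ) (m0 : ℕ) (x : ℂ) (n : ℕ) : ℂ :=
  ∏ m ∈ Finset.Icc m0 n, (1 - x * (r m : ℂ))

lemma add_one_rpow_mul_one_sub_div_le {t δ : ℝ} (ht : 0 < t) (hδ : 0 ≤ δ) :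
    (t + 1) ^ δ * (1 - δ / t) ≤ t ^ δ := by
  have hlog : Real.log (t + 1) - Real.log t ≤ 1 / t := by
    rw [← Real.log_div (by positivity) ht.ne']
    calc Real.log ((t + 1) / t) ≤ (t + 1) / t - 1 := Real.log_le_sub_one_of_pos (by positivity)
      _ = 1 / t := by field_simp; ring
  calc (t + 1) ^ δ * (1 - δ / t) ≤ (t + 1) ^ δ * Real.exp (-(δ / t)) := by
        gcongr; linarith [Real.add_one_le_exp (-(δ / t))]
    _ = Real.exp (Real.log t * δ + (δ * (Real.log (t + 1) - Real.log t - 1 / t))) := by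
        rw [Real.rpow_def_of_pos (by positivity), ← Real.exp_add]; congr 1; ring
    _ ≤ t ^ δ := by
        rw [Real.rpow_def_of_pos ht, Real.exp_le_exp]
        nlinarith

lemma tendsto_zero_of_le_one_sub_div_mul {w : ℕ → ℝ} {δ : ℝ} (hw : ∀ n, 0 ≤ w n) (hδ : 0 < δ)
    (h : ∀ᶠ n : ℕ in atTop, w (n + 1) ≤ (1 - δ / n) * w n) : Tendsto w atTop (𝓝 0) := by
  have hanti : ∀ᶠ n : ℕ in atTop, ((n + 1 : ℕ) : ℝ) ^ δ * w (n + 1) ≤ (n : ℝ) ^ δ * w n := by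
    filter_upwards [h, eventually_ge_atTop 1] with n hn hn1
    push_cast
    calc ((n : ℝ) + 1) ^ δ * w (n + 1) ≤ ((n : ℝ) + 1) ^ δ * ((1 - δ / n) * w n) := by gcongr
      _ = (((n : ℝ) + 1) ^ δ * (1 - δ / n)) * w n := by ring
      _ ≤ (n : ℝ) ^ δ * w n := by
        gcongr
        exacts [hw n, add_one_rpow_mul_one_sub_div_le (by positivity) hδ.le]
  obtain ⟨N, hN⟩ := eventually_atTop.mp hanti
  have hbound : ∀ n, N ≤ n → (n : ℝ) ^ δ * w n ≤ (N : ℝ) ^ δ * w N := by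
    intro n hn
    induction n, hn using Nat.le_induction with
    | base => exact le_rfl
    | succ n hn ih => exact (hN n hn).trans ih
  have hdecay : Tendsto (fun n : ℕ => (N : ℝ) ^ δ * w N * (n : ℝ) ^ (-δ)) atTop (𝓝 0) := by
    simpa using ((tendsto_rpow_neg_atTop hδ).comp tendsto_natCast_atTop_atTop).const_mul
      ((N : ℝ) ^ δ * w N)
  refine tendsto_of_tendsto_of_tendsto_of_le_of_le' tendsto_const_nhds hdecay
    (Eventually.of_forall hw) ?_
  filter_upwards [eventually_ge_atTop (max N 1)] with n hn
  have hn0 : (0 : ℝ) < n := by exact_mod_cast (le_of_max_le_right hn)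
  rw [Real.rpow_neg hn0.le, ← div_eq_mul_inv, le_div_iff₀ (by positivity), mul_comm]
  exact hbound n (le_of_max_le_left hn)

lemma tendsto_zero_of_le_one_sub_div_mul_add {v e : ℕ → ℝ} {δ : ℝ} (hv : ∀ n, 0 ≤ v n)
    (hδ : 0 < δ) (he : Tendsto (fun n : ℕ => (n : ℝ) * e n) atTop (𝓝 0))
    (h : ∀ᶠ n : ℕ in atTop, v (n + 1) ≤ (1 - δ / n) * v n + e n) : Tendsto v atTop (𝓝 0) := by
  refine tendsto_order.2 ⟨fun a ha => Eventually.of_forall fun n => ha.trans_le (hv n),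
    fun ε hε => ?_⟩
  -- Above the level `ε / 2` the error is absorbed by the contraction.
  set η := ε / 2 with hη
  have hexcess : Tendsto (fun n => max (v n - η) 0) atTop (𝓝 0) := by
    refine tendsto_zero_of_le_one_sub_div_mul (fun n => le_max_right _ _) hδ ?_
    filter_upwards [h, he.eventually_le_const (show (0 : ℝ) < δ * η by positivity),
      eventually_ge_atTop ⌈δ⌉₊, eventually_ge_atTop 1] with n hn hen hnδ hn1
    have hn0 : (0 : ℝ) < n := by exact_mod_cast hn1
    have hcontr : 0 ≤ 1 - δ / n := by
      rw [sub_nonneg, div_le_one hn0]; exact (Nat.ceil_le.mp hnδ)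
    have hen' : e n ≤ δ / n * η := by
      rw [div_mul_eq_mul_div, le_div_iff₀ hn0, mul_comm]; exact hen
    refine max_le ?_ (mul_nonneg hcontr (le_max_right _ _))
    calc v (n + 1) - η ≤ (1 - δ / n) * (v n - η) := by linarith
      _ ≤ (1 - δ / n) * max (v n - η) 0 := by gcongr; exact le_max_left _ _
  filter_upwards [hexcess.eventually_lt_const (show (0 : ℝ) < η by positivity)] with n hn
  linarith [le_max_left (v n - η) 0, hη]

lemma tendsto_zero_of_tendsto_natCast_mul {𝕜 : Type*} [RCLike 𝕜] {f : ℕ → 𝕜} {l : 𝕜}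
    (h : Tendsto (fun n : ℕ => (n : 𝕜) * f n) atTop (𝓝 l)) : Tendsto f atTop (𝓝 0) := by
  have := h.mul (tendsto_inv_atTop_nhds_zero_nat (𝕜 := 𝕜))
  rw [mul_zero] at this
  refine this.congr' ?_
  filter_upwards [eventually_ne_atTop 0] with n hn
  field_simp

lemma norm_one_add_le (a : ℂ) : ‖1 + a‖ ≤ 1 + a.re + ‖a‖ ^ 2 / 2 := by
  have hsq : ‖1 + a‖ ^ 2 = 1 + 2 * a.re + ‖a‖ ^ 2 := by
    simp only [Complex.sq_norm, Complex.normSq_apply, Complex.add_re, Complex.add_im,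
      Complex.one_re, Complex.one_im]
    ring
  nlinarith [sq_nonneg (‖1 + a‖ - 1)]

lemma eventually_norm_one_add_le {a : ℕ → ℂ} {α : ℂ} {δ : ℝ} (hδ : α.re < -δ)
    (ha : Tendsto (fun n : ℕ => (n : ℂ) * a n) atTop (𝓝 α)) :
    ∀ᶠ n : ℕ in atTop, ‖1 + a n‖ ≤ 1 - δ / n := by
  have hlim : Tendsto (fun n : ℕ => ((n : ℂ) * a n).re + ‖(n : ℂ) * a n‖ * ‖a n‖ / 2) atTop
      (𝓝 α.re) := by
    simpa using (Complex.continuous_re.tendsto α |>.comp ha).add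
      ((ha.norm.mul (tendsto_zero_of_tendsto_natCast_mul ha).norm).div_const 2)
  filter_upwards [hlim.eventually_le_const hδ, eventually_ge_atTop 1] with n hn hn1
  have hn0 : (0 : ℝ) < n := by exact_mod_cast hn1
  rw [← Complex.ofReal_natCast, Complex.re_ofReal_mul, norm_mul, Complex.norm_real,
    Real.norm_natCast] at hn
  calc ‖1 + a n‖ ≤ 1 + (a n).re + ‖a n‖ ^ 2 / 2 := norm_one_add_le _
    _ = 1 + (n * (a n).re + n * ‖a n‖ * ‖a n‖ / 2) / n := by field_simp; ring
    _ ≤ 1 - δ / n := by rw [sub_eq_add_neg, ← neg_div]; gcongr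

lemma tendsto_zero_of_eq_one_add_mul_add {w a ε : ℕ → ℂ} {α : ℂ} (hα : α.re < 0)
    (ha : Tendsto (fun n : ℕ => (n : ℂ) * a n) atTop (𝓝 α))
    (hε : Tendsto (fun n : ℕ => (n : ℂ) * ε n) atTop (𝓝 0))
    (hw : ∀ᶠ n : ℕ in atTop, w (n + 1) = (1 + a n) * w n + ε n) :
    Tendsto w atTop (𝓝 0) := by
  have hδ : α.re < -(-α.re / 2) := by linarith
  refine tendsto_zero_iff_norm_tendsto_zero.2 <|
    tendsto_zero_of_le_one_sub_div_mul_add (δ := -α.re / 2) (e := fun n => ‖ε n‖)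
      (fun n => norm_nonneg _) (by linarith) ?_ ?_
  · simpa [norm_mul] using hε.norm
  · filter_upwards [hw, eventually_norm_one_add_le hδ ha] with n hwn han
    rw [hwn]
    calc ‖(1 + a n) * w n + ε n‖ ≤ ‖1 + a n‖ * ‖w n‖ + ‖ε n‖ := by
          simpa [norm_mul] using norm_add_le ((1 + a n) * w n) (ε n)
      _ ≤ (1 - -α.re / 2 / n) * ‖w n‖ + ‖ε n‖ := by gcongr

lemma tendsto_of_eq_one_add_mul_add {z a b : ℕ → ℂ} {α β : ℂ} (hα : α.re < 0)
    (ha : Tendsto (fun n : ℕ => (n : ℂ) * a n) atTop (𝓝 α))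
    (hb : Tendsto (fun n : ℕ => (n : ℂ) * b n) atTop (𝓝 β))
    (hz : ∀ᶠ n : ℕ in atTop, z (n + 1) = (1 + a n) * z n + b n) :
    Tendsto z atTop (𝓝 (-β / α)) := by
  have hα0 : α ≠ 0 := fun h => by simp [h] at hα
  -- `z - (-β / α)` satisfies the same recurrence with a forcing term of order `o(1/n)`.
  have hε : Tendsto (fun n : ℕ => (n : ℂ) * (a n * (-β / α) + b n)) atTop (𝓝 0) := by
    have := (ha.mul_const (-β / α)).add hb
    rw [show α * (-β / α) + β = 0 by field_simp; ring] at this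
    exact this.congr fun n => by ring
  have := tendsto_zero_of_eq_one_add_mul_add hα ha hε (w := fun n => z n - -β / α) <| by
    filter_upwards [hz] with n h
    rw [h]; ring
  simpa using this.add_const (-β / α)

lemma tendsto_natCast_mul_log_succ_div :
    Tendsto (fun n : ℕ => (n : ℂ) * Real.log ((n + 1) / n)) atTop (𝓝 1) := by
  have h := (Real.tendsto_mul_log_one_add_div_atTop 1).comp tendsto_natCast_atTop_atTop
  refine (h.ofReal.congr' ?_).trans (by simp)
  filter_upwards [eventually_ne_atTop 0] with n hn
  have hn0 : (n : ℝ) ≠ 0 := Nat.cast_ne_zero.2 hn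
  simp [add_div, div_self hn0, add_comm]

lemma sum_range_mul_zero_pow_mul_choose {R : Type*} [CommSemiring R] (f : ℕ → R) (j : ℕ) :
    ∑ i ∈ Finset.range j, f i * 0 ^ (j - 1 - i) * j.choose i = j * f (j - 1) := by
  rcases j with _ | k
  · simp
  · rw [Finset.sum_range_succ, Finset.sum_eq_zero fun i hi => by
      rw [zero_pow (by have := Finset.mem_range.1 hi; omega), mul_zero, zero_mul]]
    simp [mul_comm]

section LogMoments

variable (r : ℕ → ℝ) (m0 : ℕ) (x y : ℂ)

lemma pprod_succ {n : ℕ} (hn : m0 ≤ n + 1) :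
    pprod r m0 x (n + 1) = pprod r m0 x n * (1 - x * r (n + 1)) :=
  Finset.prod_Icc_succ_top hn _

lemma pprod_ne_zero (hx : ∀ m, m0 ≤ m → x.re * r m < 1) (n : ℕ) :
    pprod r m0 x n ≠ 0 := by
  refine Finset.prod_ne_zero_iff.2 fun m hm h => ?_
  have := congrArg Complex.re h
  simp only [Complex.sub_re, Complex.one_re, Complex.re_mul_ofReal, Complex.zero_re] at this
  linarith [hx m (Finset.mem_Icc.1 hm).1]

def logMoment (j n : ℕ) : ℂ :=
  ∑ k ∈ Finset.Ico m0 n, (r k : ℂ) ^ 2 * (Real.log ((n : ℝ) / k) : ℂ) ^ j *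
    (pprod r m0 x n / pprod r m0 x k) * (pprod r m0 y n / pprod r m0 y k)

lemma logMoment_succ (hm0 : 1 ≤ m0) {n : ℕ} (hn : m0 ≤ n) (hx : pprod r m0 x n ≠ 0)
    (hy : pprod r m0 y n ≠ 0) (j : ℕ) :
    logMoment r m0 x y j (n + 1) =
      (1 - x * r (n + 1)) * (1 - y * r (n + 1)) *
        (∑ i ∈ Finset.range (j + 1),
            logMoment r m0 x y i n * (Real.log ((n + 1) / n) : ℂ) ^ (j - i) * j.choose i +
          (Real.log ((n + 1) / n) : ℂ) ^ j * (r n : ℂ) ^ 2) := by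
  have hlog : ∀ k ∈ Finset.Ico m0 n, (Real.log (((n + 1 : ℕ) : ℝ) / k) : ℂ) =
      Real.log ((n : ℝ) / k) + Real.log ((n + 1) / n) := by
    intro k hk
    have hk0 : (k : ℝ) ≠ 0 := Nat.cast_ne_zero.2 (by have := (Finset.mem_Ico.1 hk).1; omega)
    have hn0 : (n : ℝ) ≠ 0 := Nat.cast_ne_zero.2 (by omega)
    rw [← Complex.ofReal_add, Real.log_div (by positivity) hk0, Real.log_div hn0 hk0,
      Real.log_div (by positivity) hn0]
    push_cast; ring
  simp only [logMoment]
  rw [Finset.sum_Ico_succ_top hn, pprod_succ r m0 x (by omega), pprod_succ r m0 y (by omega),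
    Finset.sum_congr rfl fun k hk => by rw [hlog k hk, add_pow, Finset.mul_sum], mul_add]
  congr 1
  · simp only [Finset.mul_sum, Finset.sum_mul]
    rw [Finset.sum_comm]
    refine Finset.sum_congr rfl fun i _ => Finset.sum_congr rfl fun k _ => ?_
    ring
  · field_simp
    push_cast
    ring

def logMomentCoeff (n : ℕ) : ℂ :=
  (n + 1) / n * ((1 - x * r (n + 1)) * (1 - y * r (n + 1))) - 1

def logMomentForcing (j n : ℕ) : ℂ :=
  (n + 1) * ((1 - x * r (n + 1)) * (1 - y * r (n + 1))) *
    (∑ i ∈ Finset.range j,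
        logMoment r m0 x y i n * (Real.log ((n + 1) / n) : ℂ) ^ (j - i) * j.choose i +
      (Real.log ((n + 1) / n) : ℂ) ^ j * (r n : ℂ) ^ 2)

lemma natCast_mul_logMoment_succ (hm0 : 1 ≤ m0) {n : ℕ} (hn : m0 ≤ n)
    (hx : pprod r m0 x n ≠ 0) (hy : pprod r m0 y n ≠ 0) (j : ℕ) :
    ((n + 1 : ℕ) : ℂ) * logMoment r m0 x y j (n + 1) =
      (1 + logMomentCoeff r x y n) * (n * logMoment r m0 x y j n) +
        logMomentForcing r m0 x y j n := by
  have hn0 : (n : ℂ) ≠ 0 := Nat.cast_ne_zero.2 (by omega)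
  rw [logMoment_succ r m0 x y hm0 hn hx hy, Finset.sum_range_succ, logMomentCoeff,
    logMomentForcing]
  simp only [Nat.sub_self, pow_zero, Nat.choose_self]
  field_simp
  push_cast
  ring

lemma tendsto_natCast_mul_logMomentCoeff {c : ℝ}
    (hnr : Tendsto (fun n : ℕ => (n : ℝ) * r n) atTop (𝓝 c)) :
    Tendsto (fun n : ℕ => (n : ℂ) * logMomentCoeff r x y n) atTop (𝓝 (1 - c * (x + y))) := by
  have hnrC : Tendsto (fun n : ℕ => ((n + 1 : ℕ) : ℂ) * r (n + 1)) atTop (𝓝 c) := by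
    simpa using (hnr.comp (tendsto_add_atTop_nat 1)).ofReal
  have hrC := (tendsto_zero_of_tendsto_natCast_mul (l := (c : ℂ))
    (by simpa using hnr.ofReal)).comp (tendsto_add_atTop_nat 1)
  have hlim := (tendsto_const_nhds (x := (1 : ℂ))).sub (hnrC.const_mul (x + y)) |>.add
    ((hnrC.mul hrC).const_mul (x * y))
  rw [mul_zero, mul_zero, add_zero, mul_comm (x + y)] at hlim
  refine hlim.congr' ?_
  filter_upwards [eventually_ne_atTop 0] with n hn
  have hn0 : (n : ℂ) ≠ 0 := Nat.cast_ne_zero.2 hn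
  simp only [Function.comp_apply, logMomentCoeff]
  field_simp
  push_cast
  ring

lemma tendsto_natCast_mul_logMomentForcing {c : ℝ}
    (hnr : Tendsto (fun n : ℕ => (n : ℝ) * r n) atTop (𝓝 c)) {ℓ : ℕ → ℂ} {j : ℕ}
    (hℓ : ∀ i < j, Tendsto (fun n : ℕ => (n : ℂ) * logMoment r m0 x y i n) atTop (𝓝 (ℓ i))) :
    Tendsto (fun n : ℕ => (n : ℂ) * logMomentForcing r m0 x y j n) atTop
      (𝓝 (j * ℓ (j - 1) + 0 ^ j * (c : ℂ) ^ 2)) := by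
  set lg : ℕ → ℂ := fun n => Real.log ((n + 1) / n) with hlg_def
  have hnrC : Tendsto (fun n : ℕ => (n : ℂ) * r n) atTop (𝓝 c) := by simpa using hnr.ofReal
  have hrC := (tendsto_zero_of_tendsto_natCast_mul hnrC).comp (tendsto_add_atTop_nat 1)
  have hu : Tendsto (fun n : ℕ => (1 - x * r (n + 1)) * (1 - y * r (n + 1))) atTop (𝓝 1) := by
    simpa using ((tendsto_const_nhds (x := (1 : ℂ))).sub (hrC.const_mul x)).mul
      ((tendsto_const_nhds (x := (1 : ℂ))).sub (hrC.const_mul y))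
  have hlg : Tendsto lg atTop (𝓝 0) :=
    tendsto_zero_of_tendsto_natCast_mul tendsto_natCast_mul_log_succ_div
  have hnlg (m : ℕ) : Tendsto (fun n : ℕ => (n : ℂ) * lg n ^ (m + 1)) atTop (𝓝 (0 ^ m)) := by
    have h := tendsto_natCast_mul_log_succ_div.mul (hlg.pow m)
    rw [one_mul] at h
    exact h.congr fun n => by ring
  -- Of the lower moments only `i = j - 1` survives: the others carry a factor `ln((n+1)/n) → 0`.
  have hsum := tendsto_finsetSum (Finset.range j) fun i hi =>
    ((hℓ i (Finset.mem_range.1 hi)).mul (hnlg (j - 1 - i))).mul_const (j.choose i : ℂ)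
  have h := (((tendsto_const_nhds (x := (1 : ℂ))).add tendsto_inv_atTop_nhds_zero_nat).mul
    hu).mul (hsum.add ((hlg.pow j).mul (hnrC.pow 2)))
  rw [sum_range_mul_zero_pow_mul_choose, add_zero, mul_one, one_mul] at h
  refine h.congr' ?_
  filter_upwards [eventually_ne_atTop 0] with n hn
  have hn0 : (n : ℂ) ≠ 0 := Nat.cast_ne_zero.2 hn
  have hsum_eq : ∑ i ∈ Finset.range j, n * logMoment r m0 x y i n *
        (n * lg n ^ (j - 1 - i + 1)) * j.choose i =
      n * n * ∑ i ∈ Finset.range j, logMoment r m0 x y i n * lg n ^ (j - i) * j.choose i := by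
    rw [Finset.mul_sum]
    refine Finset.sum_congr rfl fun i hi => ?_
    rw [show j - 1 - i + 1 = j - i by have := Finset.mem_range.1 hi; omega]
    ring
  rw [hsum_eq, logMomentForcing, hlg_def]
  field_simp

theorem tendsto_natCast_mul_logMoment {c : ℝ}
    (hnr : Tendsto (fun n : ℕ => (n : ℝ) * r n) atTop (𝓝 c)) (hxy : 1 < c * (x.re + y.re))
    (hm0 : 1 ≤ m0) (hx : ∀ n, pprod r m0 x n ≠ 0) (hy : ∀ n, pprod r m0 y n ≠ 0) (j : ℕ) :
    Tendsto (fun n : ℕ => (n : ℂ) * logMoment r m0 x y j n) atTop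
      (𝓝 (j.factorial * (c : ℂ) ^ 2 / (c * (x + y) - 1) ^ (j + 1))) := by
  have hα : (1 - c * (x + y) : ℂ).re < 0 := by simp; linarith
  have hD : (c * (x + y) - 1 : ℂ) ≠ 0 := fun h => by
    have h' : (1 - c * (x + y) : ℂ) = 0 := by linear_combination -h
    simp [h'] at hα
  induction j using Nat.strong_induction_on with
  | _ j ih =>
  convert tendsto_of_eq_one_add_mul_add (z := fun n => (n : ℂ) * logMoment r m0 x y j n) hα
    (tendsto_natCast_mul_logMomentCoeff r x y hnr)
    (tendsto_natCast_mul_logMomentForcing r m0 x y hnr ih)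
    ((eventually_ge_atTop m0).mono fun n hn =>
      natCast_mul_logMoment_succ r m0 x y hm0 hn (hx n) (hy n) j) using 2
  rw [show (1 - c * (x + y) : ℂ) = -(c * (x + y) - 1) by ring, neg_div_neg_eq]
  rcases j with _ | k
  · simp
  · simp [Nat.factorial_succ]
    field_simp
    ring

end LogMoments

theorem product_sum_limits_supercritical_general
    (c : ℝ) (r : ℕ → ℝ) (hr0 : ∀ n, 0 ≤ r n)
    (hrO : (fun n : ℕ => (n : ℝ) * r n - c) =O[atTop] fun n : ℕ => (n : ℝ)⁻¹)
    (x y : ℂ)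
    (hsup : 1 < c * (x.re + y.re))
    (m0 : ℕ) (hm0 : 2 ≤ m0) (hm : ∀ m, m0 ≤ m → max x.re y.re * r m < 1) :
    Tendsto
      (fun n : ℕ => (n : ℂ) *
        ∑ k ∈ Finset.Ico m0 n, ((r k : ℂ)) ^ 2 *
          (pprod r m0 x n / pprod r m0 x k) * (pprod r m0 y n / pprod r m0 y k))
      atTop (𝓝 ((c : ℂ) ^ 2 / ((c : ℂ) * (x + y) - 1))) ∧
    Tendsto
      (fun n : ℕ => (n : ℂ) *
        ∑ k ∈ Finset.Ico m0 n, ((r k : ℂ)) ^ 2 * (Real.log ((n : ℝ) / k) : ℂ) *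
          (pprod r m0 x n / pprod r m0 x k) * (pprod r m0 y n / pprod r m0 y k))
      atTop (𝓝 ((c : ℂ) ^ 2 / ((c : ℂ) * (x + y) - 1) ^ 2)) ∧
    Tendsto
      (fun n : ℕ => (n : ℂ) *
        ∑ k ∈ Finset.Ico m0 n, ((r k : ℂ)) ^ 2 * (Real.log ((n : ℝ) / k) : ℂ) ^ 2 *
          (pprod r m0 x n / pprod r m0 x k) * (pprod r m0 y n / pprod r m0 y k))
      atTop (𝓝 (2 * (c : ℂ) ^ 2 / ((c : ℂ) * (x + y) - 1) ^ 3)) := by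
  have hnr : Tendsto (fun n : ℕ => (n : ℝ) * r n) atTop (𝓝 c) := by
    simpa using (hrO.trans_tendsto tendsto_inv_atTop_nhds_zero_nat).add_const c
  have hp (z : ℂ) (hz : z.re ≤ max x.re y.re) (n : ℕ) : pprod r m0 z n ≠ 0 :=
    pprod_ne_zero r m0 z (fun m hm0m => (mul_le_mul_of_nonneg_right hz (hr0 m)).trans_lt
      (hm m hm0m)) n
  have h := tendsto_natCast_mul_logMoment r m0 x y hnr hsup (by omega)
    (hp x (le_max_left _ _)) (hp y (le_max_right _ _))
  refine ⟨?_, ?_, ?_⟩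
  · simpa [logMoment] using h 0
  · simpa [logMoment] using h 1
  · simpa [logMoment] using h 2

/-- **Lemma `lemma-tecnico_2` (i), case `c(a_x + a_y) > 1`**: under `n r_n = c + O(n⁻¹)`,
(1) `n ∑_{k=m₀}^{n-1} r_k² F_{k+1,n}(x)F_{k+1,n}(y) → c²/(c(x+y)-1)`,
(2) `n ∑_{k=m₀}^{n-1} r_k² ln(n/k) F_{k+1,n}(x)F_{k+1,n}(y) → c²/(c(x+y)-1)²`,
(3) `n ∑_{k=m₀}^{n-1} r_k² ln²(n/k) F_{k+1,n}(x)F_{k+1,n}(y) → 2c²/(c(x+y)-1)³`. -/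
theorem product_sum_limits_supercritical
    (c : ℝ) (hc : 0 < c) (r : ℕ → ℝ) (hr0 : ∀ n, 0 ≤ r n) (hr1 : ∀ n, r n < 1)
    (hrO : (fun n : ℕ => (n : ℝ) * r n - c) =O[atTop] fun n : ℕ => (n : ℝ)⁻¹)
    (x y : ℂ) (hx : 0 < x.re) (hy : 0 < y.re)
    (hsup : 1 < c * (x.re + y.re))
    (m0 : ℕ) (hm0 : 2 ≤ m0) (hm : ∀ m, m0 ≤ m → max x.re y.re * r m < 1) :
    Tendsto
      (fun n : ℕ => (n : ℂ) *
        ∑ k ∈ Finset.Ico m0 n, ((r k : ℂ)) ^ 2 *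
          (pprod r m0 x n / pprod r m0 x k) * (pprod r m0 y n / pprod r m0 y k))
      atTop (𝓝 ((c : ℂ) ^ 2 / ((c : ℂ) * (x + y) - 1))) ∧
    Tendsto
      (fun n : ℕ => (n : ℂ) *
        ∑ k ∈ Finset.Ico m0 n, ((r k : ℂ)) ^ 2 * (Real.log ((n : ℝ) / k) : ℂ) *
          (pprod r m0 x n / pprod r m0 x k) * (pprod r m0 y n / pprod r m0 y k))
      atTop (𝓝 ((c : ℂ) ^ 2 / ((c : ℂ) * (x + y) - 1) ^ 2)) ∧
    Tendsto
      (fun n : ℕ => (n : ℂ) *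
        ∑ k ∈ Finset.Ico m0 n, ((r k : ℂ)) ^ 2 * (Real.log ((n : ℝ) / k) : ℂ) ^ 2 *
          (pprod r m0 x n / pprod r m0 x k) * (pprod r m0 y n / pprod r m0 y k))
      atTop (𝓝 (2 * (c : ℂ) ^ 2 / ((c : ℂ) * (x + y) - 1) ^ 3)) :=
  product_sum_limits_supercritical_general c r hr0 hrO x y hsup m0 hm0 hm

end
end
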